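/- arXiv:1910.03759 — 3 statements merged into one kernel-verified Lean document; each statement's English description precedes it below -/
import Mathlib

section
/- The sequence ω converges to 0: lim_{j→∞} ω(j) = 0. -/
/-!
The partial sums `P N = ∑_{l < N} φ l` satisfy `P (N + 1) = φ 0 + α P N + β P (N - t̄)`, so the
nonnegative sequence `φ` has bounded partial sums and its sum `L` solves `L = φ 0 + (α + β) L`;
as `α + β = 1 - λ_e`, this gives `λ_e L = φ 0`. Hence for `j > t̄` the recurrence of `ω` reads
`ω j = α ω (j - 1) + e j` with `e j = φ 0 - λ_e P (j - t̄) → 0`, and a contraction (`0 ≤ α < 1`)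
driven by a vanishing input tends to `0`.
-/

open Filter Topology Finset

theorem tendsto_zero_of_eventually_eq_mul_add {a : ℝ} (ha0 : 0 ≤ a) (ha1 : a < 1)
    {x e : ℕ → ℝ} (hx : ∀ᶠ k in atTop, x (k + 1) = a * x k + e k)
    (he : Tendsto e atTop (𝓝 0)) : Tendsto x atTop (𝓝 0) := by
  rw [Metric.tendsto_nhds]
  intro ε hε
  have hδ : 0 < (1 - a) * (ε / 2) := mul_pos (by linarith) (half_pos hε)
  obtain ⟨M, hM⟩ := eventually_atTop.1 (hx.and (Metric.tendsto_nhds.1 he _ hδ))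
  -- `|x| - ε / 2` decays geometrically from time `M` on.
  set y : ℕ → ℝ := fun k => |x (k + M)| - ε / 2 with hy_def
  have hy : ∀ k, y k ≤ a ^ k * y 0 := fun k => le_geom ha0 k fun i _ => by
    obtain ⟨hrec, hsmall⟩ := hM (i + M) (by omega)
    rw [Real.dist_eq, sub_zero] at hsmall
    have : |x (i + 1 + M)| ≤ a * |x (i + M)| + |e (i + M)| := calc
      |x (i + 1 + M)| = |a * x (i + M) + e (i + M)| := by rw [← hrec, Nat.add_right_comm]
      _ ≤ |a * x (i + M)| + |e (i + M)| := abs_add_le _ _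
      _ = a * |x (i + M)| + |e (i + M)| := by rw [abs_mul, abs_of_nonneg ha0]
    simp only [hy_def]
    linarith
  have hpow : ∀ᶠ k in atTop, a ^ k * y 0 < ε / 2 := by
    have := (tendsto_pow_atTop_nhds_zero_of_lt_one ha0 ha1).mul_const (y 0)
    rw [zero_mul] at this
    exact this.eventually (gt_mem_nhds (half_pos hε))
  obtain ⟨K, hK⟩ := eventually_atTop.1 hpow
  refine eventually_atTop.2 ⟨K + M, fun n hn => ?_⟩
  obtain ⟨k, rfl⟩ : ∃ k, n = k + M := ⟨n - M, by omega⟩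
  have h1 : |x (k + M)| - ε / 2 ≤ a ^ k * y 0 := hy k
  have h2 := hK k (by omega)
  rw [Real.dist_eq, sub_zero]
  linarith

structure IsDelayedRecurrence (α β : ℝ) (t : ℕ) (φ : ℕ → ℝ) : Prop where
  succ_of_lt : ∀ j, j < t → φ (j + 1) = α * φ j
  succ_of_le : ∀ j, t ≤ j → φ (j + 1) = α * φ j + β * φ (j - t)

namespace IsDelayedRecurrence

variable {α β : ℝ} {t : ℕ} {φ : ℕ → ℝ}

theorem nonneg (h : IsDelayedRecurrence α β t φ) (hα : 0 ≤ α) (hβ : 0 ≤ β) (h0 : 0 ≤ φ 0) :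
    ∀ j, 0 ≤ φ j
  | 0 => h0
  | j + 1 => by
    rcases lt_or_ge j t with hj | hj
    · rw [h.succ_of_lt j hj]
      exact mul_nonneg hα (h.nonneg hα hβ h0 j)
    · rw [h.succ_of_le j hj]
      exact add_nonneg (mul_nonneg hα (h.nonneg hα hβ h0 j))
        (mul_nonneg hβ (h.nonneg hα hβ h0 (j - t)))

/-- For `N < t` the last sum is empty, since `N - t = 0` in `ℕ`. -/
theorem sum_range_succ (h : IsDelayedRecurrence α β t φ) (N : ℕ) :
    ∑ i ∈ range (N + 1), φ i = φ 0 + α * ∑ i ∈ range N, φ i + β * ∑ i ∈ range (N - t), φ i := by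
  induction N with
  | zero => simp
  | succ N ih =>
    rw [Finset.sum_range_succ φ (N + 1)]
    rcases lt_or_ge N t with hN | hN
    · rw [show N + 1 - t = N - t by omega, h.succ_of_lt N hN]
      linear_combination ih - α * Finset.sum_range_succ φ N
    · rw [show N + 1 - t = N - t + 1 by omega, h.succ_of_le N hN]
      linear_combination ih - α * Finset.sum_range_succ φ N - β * Finset.sum_range_succ φ (N - t)

theorem hasSum (h : IsDelayedRecurrence α β t φ) (hα : 0 ≤ α) (hβ : 0 ≤ β) (h0 : 0 ≤ φ 0)
    (hαβ : α + β < 1) : HasSum φ (φ 0 / (1 - (α + β))) := by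
  have hφ := h.nonneg hα hβ h0
  have hstep : ∀ N, ∑ i ∈ range (N + 1), φ i ≤ φ 0 + (α + β) * ∑ i ∈ range N, φ i := fun N => by
    have : ∑ i ∈ range (N - t), φ i ≤ ∑ i ∈ range N, φ i :=
      sum_le_sum_of_subset_of_nonneg (range_subset_range.2 (Nat.sub_le N t)) fun i _ _ => hφ i
    rw [h.sum_range_succ]
    linarith [mul_le_mul_of_nonneg_left this hβ]
  have hbound : ∀ N, ∑ i ∈ range N, φ i ≤ φ 0 / (1 - (α + β)) := by
    have hB : φ 0 + (α + β) * (φ 0 / (1 - (α + β))) = φ 0 / (1 - (α + β)) := by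
      field_simp [show 1 - (α + β) ≠ 0 by linarith]
      ring
    intro N
    induction N with
    | zero => simpa using div_nonneg h0 (by linarith)
    | succ N ih => linarith [hstep N, mul_le_mul_of_nonneg_left ih (add_nonneg hα hβ)]
  have hs := summable_of_sum_range_le hφ hbound
  have hlim := hs.hasSum.tendsto_sum_nat
  have hfix : ∑' i, φ i = φ 0 + α * ∑' i, φ i + β * ∑' i, φ i := by
    refine tendsto_nhds_unique (hlim.comp (tendsto_add_atTop_nat 1)) ?_
    refine ((tendsto_const_nhds.add (hlim.const_mul α)).add
      ((hlim.comp (tendsto_sub_atTop_nat t)).const_mul β)).congr fun N => ?_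
    exact (h.sum_range_succ N).symm
  convert hs.hasSum using 1
  rw [div_eq_iff (by linarith)]
  linarith

end IsDelayedRecurrence

theorem omega_tendsto_zero_general
    (lam lam_e : ℝ) (hlam0 : 0 < lam) (hlam1 : lam < 1)
    (hle0 : 0 < lam_e) (hle1 : lam_e < 1)
    (tbar : ℕ)
    (φ : ℕ → ℝ)
    (hφ0 : φ 0 = lam * lam_e / (lam * (tbar : ℝ) + 1))
    (hφ1 : ∀ j, j < tbar → φ (j + 1) = (1 - lam) * (1 - lam_e) * φ j)
    (hφ2 : ∀ j, tbar ≤ j → φ (j + 1) =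
      (1 - lam) * (1 - lam_e) * φ j + lam * (1 - lam_e) * φ (j - tbar))
    (ω : ℕ → ℝ)
    (hω2 : ∀ j, tbar + 1 ≤ j →
      ω j = (1 - lam) * (1 - lam_e) * ω (j - 1) + φ 0
        - lam_e * ∑ l ∈ Finset.range (j - tbar), φ l) :
    Tendsto ω atTop (nhds 0) := by
  have hα0 : 0 ≤ (1 - lam) * (1 - lam_e) := mul_nonneg (by linarith) (by linarith)
  have hsum : HasSum φ (φ 0 / lam_e) := by
    have := IsDelayedRecurrence.hasSum ⟨hφ1, hφ2⟩ hα0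
      (mul_nonneg hlam0.le (by linarith)) (by rw [hφ0]; positivity) (by nlinarith)
    rwa [show 1 - ((1 - lam) * (1 - lam_e) + lam * (1 - lam_e)) = lam_e by ring] at this
  have he : Tendsto (fun k => φ 0 - lam_e * ∑ l ∈ range (k + 1 - tbar), φ l) atTop (𝓝 0) := by
    have := ((hsum.tendsto_sum_nat.comp ((tendsto_sub_atTop_nat tbar).comp
      (tendsto_add_atTop_nat 1))).const_mul lam_e).const_sub (φ 0)
    rwa [mul_div_cancel₀ _ hle0.ne', sub_self] at this
  refine tendsto_zero_of_eventually_eq_mul_add hα0 (by nlinarith) ?_ he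
  filter_upwards [eventually_ge_atTop tbar] with k hk
  rw [hω2 (k + 1) (by omega), Nat.add_sub_cancel]
  ring

/-- `ω` converges to `0`. -/
theorem omega_tendsto_zero
    (lam lam_e : ℝ) (hlam0 : 0 < lam) (hlam1 : lam < 1)
    (hle0 : 0 < lam_e) (hle1 : lam_e < 1)
    (tbar : ℕ)
    (φ : ℕ → ℝ)
    (hφ0 : φ 0 = lam * lam_e / (lam * (tbar : ℝ) + 1))
    (hφ1 : ∀ j, j < tbar → φ (j + 1) = (1 - lam) * (1 - lam_e) * φ j)
    (hφ2 : ∀ j, tbar ≤ j → φ (j + 1) =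
      (1 - lam) * (1 - lam_e) * φ j + lam * (1 - lam_e) * φ (j - tbar))
    (ω : ℕ → ℝ)
    (hω0 : ω 0 = lam_e / (lam * (tbar : ℝ) + 1))
    (hω1 : ∀ j, 1 ≤ j → j ≤ tbar →
      ω j = (1 - lam) * (1 - lam_e) * ω (j - 1) + φ 0)
    (hω2 : ∀ j, tbar + 1 ≤ j →
      ω j = (1 - lam) * (1 - lam_e) * ω (j - 1) + φ 0
        - lam_e * ∑ l ∈ Finset.range (j - tbar), φ l) :
    Tendsto ω atTop (nhds 0) :=
  omega_tendsto_zero_general lam lam_e hlam0 hlam1 hle0 hle1 tbar φ hφ0 hφ1 hφ2 ω hω2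
end

section
/- The sequence ω is a probability distribution on ℕ: ω is summable and Σ_{j=0}^∞ ω(j) = 1. -/
/-!
Write `P n = ∑_{i<n} φ i`. The recurrence of `φ` says that
`P (n + 1) = φ 0 + α P n + β P (n - t̄)`, so for nonnegative `φ` the partial sums are bounded
by `φ 0 / λ_e`, and in the limit `∑ φ = φ 0 / λ_e = λ / (λ t̄ + 1)`. The sequence `ω` is then
determined by the window sums of `φ`: `λ ω j = φ j + λ (P j - P (j - t̄))`, which is checked by
induction against the recurrence of `ω` using `β = λ (α + β)` and `α + β + λ_e = 1`. Each window
sum is a sum of `t̄` shifted copies of `φ`, so `∑ ω = ∑ φ / λ + t̄ ∑ φ = 1`.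
-/

open Filter Finset

def delay {M : Type*} [Zero M] (t : ℕ) (f : ℕ → M) (j : ℕ) : M :=
  if t ≤ j then f (j - t) else 0

section Delay

variable {M : Type*}

theorem sum_range_delay [AddCommMonoid M] (t n : ℕ) (f : ℕ → M) :
    ∑ i ∈ range n, delay t f i = ∑ i ∈ range (n - t), f i := by
  induction n with
  | zero => simp
  | succ n ih =>
    rw [sum_range_succ, ih, delay]
    split_ifs with h
    · rw [show n + 1 - t = n - t + 1 by omega, sum_range_succ]
    · rw [show n + 1 - t = n - t by omega, add_zero]

theorem delay_eq_sub [AddCommGroup M] (t j : ℕ) (f : ℕ → M) :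
    delay t f j = ∑ i ∈ range (j + 1 - t), f i - ∑ i ∈ range (j - t), f i := by
  rw [← sum_range_delay, ← sum_range_delay, sum_range_succ, add_sub_cancel_left]

theorem hasSum_delay [AddCommMonoid M] [TopologicalSpace M] {f : ℕ → M} {s : M}
    (hf : HasSum f s) (t : ℕ) : HasSum (delay t f) s := by
  have hshift : delay t f ∘ (· + t) = f := by
    funext j; simp [delay]
  refine ((add_left_injective t).hasSum_iff fun j hj => ?_).1 (by rwa [hshift])
  have : ¬ t ≤ j := fun h => hj ⟨j - t, Nat.sub_add_cancel h⟩
  simp [delay, this]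

theorem hasSum_sum_range_sub_sum_range_sub [AddCommGroup M] [TopologicalSpace M]
    [IsTopologicalAddGroup M] {f : ℕ → M} {s : M} (hf : HasSum f s) (m : ℕ) :
    HasSum (fun j => ∑ i ∈ range j, f i - ∑ i ∈ range (j - m), f i) (m • s) := by
  induction m with
  | zero => simp [hasSum_zero]
  | succ m ih =>
    rw [succ_nsmul]
    refine (ih.add (hasSum_delay hf (m + 1))).congr_fun fun j => ?_
    rw [delay_eq_sub, Nat.add_sub_add_right]
    abel

end Delay

section DelayRecurrence

variable {a b : ℝ} {t : ℕ} {f : ℕ → ℝ}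

theorem sum_range_succ_of_delayRec (hrec : ∀ j, f (j + 1) = a * f j + b * delay t f j) (n : ℕ) :
    ∑ i ∈ range (n + 1), f i =
      f 0 + a * ∑ i ∈ range n, f i + b * ∑ i ∈ range (n - t), f i := by
  simp only [sum_range_succ', hrec, sum_add_distrib, ← mul_sum, sum_range_delay]
  ring

theorem nonneg_of_delayRec (hrec : ∀ j, f (j + 1) = a * f j + b * delay t f j)
    (ha : 0 ≤ a) (hb : 0 ≤ b) (h0 : 0 ≤ f 0) (j : ℕ) : 0 ≤ f j := by
  induction j using Nat.strong_induction_on with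
  | _ j ih =>
    cases j with
    | zero => exact h0
    | succ j =>
      have hdelay : 0 ≤ delay t f j := by
        unfold delay; split_ifs
        exacts [ih _ (by omega), le_rfl]
      rw [hrec]
      exact add_nonneg (mul_nonneg ha (ih j j.lt_succ_self)) (mul_nonneg hb hdelay)

theorem hasSum_of_delayRec (hrec : ∀ j, f (j + 1) = a * f j + b * delay t f j)
    (ha : 0 ≤ a) (hb : 0 ≤ b) (hab : a + b < 1) (h0 : 0 ≤ f 0) :
    HasSum f (f 0 / (1 - (a + b))) := by
  have hf := nonneg_of_delayRec hrec ha hb h0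
  have hmono : Monotone fun n => ∑ i ∈ range n, f i :=
    monotone_nat_of_le_succ fun n => by simpa [sum_range_succ] using hf n
  -- `P (n + 1) = f 0 + a P n + b P (n - t) ≤ f 0 + (a + b) P (n + 1)` for the partial sums `P`.
  have hbound (n : ℕ) : ∑ i ∈ range n, f i ≤ f 0 / (1 - (a + b)) := by
    have h := sum_range_succ_of_delayRec hrec n
    have h₁ := hmono n.le_succ
    have h₂ := hmono (show n - t ≤ n + 1 by omega)
    rw [le_div_iff₀ (by linarith)]
    nlinarith
  obtain ⟨S, hS⟩ : Summable f := summable_of_sum_range_le hf hbound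
  have hlim := hS.tendsto_sum_nat
  have hrec_lim : Tendsto (fun n => ∑ i ∈ range (n + 1), f i) atTop
      (nhds (f 0 + a * S + b * S)) := by
    simp_rw [sum_range_succ_of_delayRec hrec]
    exact ((hlim.const_mul a).const_add _).add
      ((hlim.comp (tendsto_sub_atTop_nat t)).const_mul b)
  have hS_eq : S = f 0 + a * S + b * S :=
    tendsto_nhds_unique ((tendsto_add_atTop_iff_nat 1).2 hlim) hrec_lim
  convert hS
  rw [div_eq_iff (by linarith)]
  linarith

theorem mul_eq_of_delayRec (hrec : ∀ j, f (j + 1) = a * f j + b * delay t f j)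
    {c e : ℝ} {ω : ℕ → ℝ} (hbc : b = c * (a + b)) (he : a + b + e = 1)
    (hω0 : c * ω 0 = f 0)
    (hω : ∀ j, ω (j + 1) = a * ω j + f 0 - e * ∑ i ∈ range (j + 1 - t), f i) (j : ℕ) :
    c * ω j = f j + c * (∑ i ∈ range j, f i - ∑ i ∈ range (j - t), f i) := by
  induction j with
  | zero => simp [hω0]
  | succ j ih =>
    have hP := sum_range_succ_of_delayRec hrec j
    rw [hω, hrec, hP, delay_eq_sub]
    linear_combination a * ih
      + (∑ i ∈ range (j - t), f i - ∑ i ∈ range (j + 1 - t), f i) * hbc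
      - c * (∑ i ∈ range (j + 1 - t), f i) * he

end DelayRecurrence

/-- `ω` is a probability distribution on `ℕ`. -/
theorem omega_probability_distribution
    (lam lam_e : ℝ) (hlam0 : 0 < lam) (hlam1 : lam < 1)
    (hle0 : 0 < lam_e) (hle1 : lam_e < 1)
    (tbar : ℕ)
    (φ : ℕ → ℝ)
    (hφ0 : φ 0 = lam * lam_e / (lam * (tbar : ℝ) + 1))
    (hφ1 : ∀ j, j < tbar → φ (j + 1) = (1 - lam) * (1 - lam_e) * φ j)
    (hφ2 : ∀ j, tbar ≤ j → φ (j + 1) =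
      (1 - lam) * (1 - lam_e) * φ j + lam * (1 - lam_e) * φ (j - tbar))
    (ω : ℕ → ℝ)
    (hω0 : ω 0 = lam_e / (lam * (tbar : ℝ) + 1))
    (hω1 : ∀ j, 1 ≤ j → j ≤ tbar →
      ω j = (1 - lam) * (1 - lam_e) * ω (j - 1) + φ 0)
    (hω2 : ∀ j, tbar + 1 ≤ j →
      ω j = (1 - lam) * (1 - lam_e) * ω (j - 1) + φ 0
        - lam_e * ∑ l ∈ Finset.range (j - tbar), φ l) :
    Summable ω ∧ ∑' j : ℕ, ω j = 1 := by
  have hrec : ∀ j, φ (j + 1) =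
      (1 - lam) * (1 - lam_e) * φ j + lam * (1 - lam_e) * delay tbar φ j := by
    intro j
    rcases lt_or_ge j tbar with h | h
    · simp [hφ1 j h, delay, not_le.2 h]
    · simp [hφ2 j h, delay, h]
  have hφ : HasSum φ (lam / (lam * tbar + 1)) := by
    convert hasSum_of_delayRec hrec (mul_nonneg (by linarith) (by linarith))
      (mul_nonneg (by linarith) (by linarith)) (by nlinarith)
      (by rw [hφ0]; positivity) using 1
    rw [hφ0]
    field_simp [hle0.ne']
    ring
  have hω : ∀ j, ω (j + 1) = (1 - lam) * (1 - lam_e) * ω j + φ 0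
      - lam_e * ∑ i ∈ range (j + 1 - tbar), φ i := by
    intro j
    rcases le_or_gt (j + 1) tbar with h | h
    · simp [hω1 (j + 1) (by omega) h, Nat.sub_eq_zero_of_le h]
    · exact hω2 (j + 1) h
  have hclosed := mul_eq_of_delayRec hrec (c := lam) (e := lam_e) (by ring) (by ring)
    (by rw [hω0, hφ0]; field_simp) hω
  have hsum : HasSum ω (lam / (lam * tbar + 1) / lam + tbar • (lam / (lam * tbar + 1))) := by
    refine ((hφ.div_const lam).add (hasSum_sum_range_sub_sum_range_sub hφ tbar)).congr_fun
      fun j => ?_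
    field_simp
    linear_combination hclosed j
  refine ⟨hsum.summable, hsum.tsum_eq.trans ?_⟩
  rw [nsmul_eq_mul]
  field_simp
  ring
end

section
/- (Theorem 2, part II.) Suppose the series S = Σ_{j=0}^∞ ω(j)·c_j converges. Then the truncations L(N, t̄) = Σ_{j=0}^{N} ω(j)·c_j + (1 − Σ_{j=0}^{N} ω(j))·c_{N+1} converge to S as the truncation horizon grows: lim_{N→∞} L(N, t̄) = S. -/
/-!
The weights `ω` sum to one and `c` is nondecreasing (the iterates of the Loewner-monotone map
`f` starting from `P̄ ≤ f P̄` increase). Hence the correction term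
`(1 - ∑_{j ≤ N} ω j) c_{N+1} = ∑_{j > N} ω j c_{N+1}` lies between `(∑_{j > N} ω j) c_0` and the
tail `∑_{j > N} ω j c_j` of the convergent series, and both bounds tend to `0`.

For `∑ ω = 1`, note `1 - α - β = λ_e`. The partial sums `S m` of `φ` satisfy
`S (m + 1) = φ 0 + α S m + β S (m - t̄)`, so `S m ≤ φ 0 / λ_e`, and the deficits
`T m = φ 0 / λ_e - S m` (a posteriori the tails of `∑ φ`) are nonnegative and obey the delayed
recursion `T (m + 1) = α T m + β T (m - t̄)`, which sums to `∑ T`. The recursion for `ω` reads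
`ω (j + 1) = α ω j + λ_e T (j + 1 - t̄)`, and summing it gives `∑ ω = 1`.
Throughout, `m - t` is truncated subtraction, so `x (m - t) = x 0` for `m ≤ t`.
-/

open Matrix Filter Finset Topology

theorem HasSum.comp_tsub {G : Type*} [AddCommGroup G] [TopologicalSpace G]
    [IsTopologicalAddGroup G] {f : ℕ → G} {s : G} (h : HasSum f s) (t : ℕ) :
    HasSum (fun j => f (j - t)) (t • f 0 + s) := by
  rw [← hasSum_nat_add_iff' t]
  have : ∑ j ∈ range t, f (j - t) = t • f 0 := by
    rw [sum_congr rfl fun j hj => by rw [Nat.sub_eq_zero_of_le (mem_range.mp hj).le],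
      sum_const, card_range]
  simpa [this] using h

theorem HasSum.eq_add_mul_add_of_succ_eq {x g : ℕ → ℝ} {a X S : ℝ} (hx : HasSum x X)
    (hg : HasSum g S) (h : ∀ j, x (j + 1) = a * x j + g j) : X = x 0 + a * X + S := by
  have hshift : HasSum (fun j => x (j + 1)) (X - x 0) := by
    simpa using (hasSum_nat_add_iff' 1).mpr hx
  have hrec : HasSum (fun j => x (j + 1)) (a * X + S) := by
    simpa only [h] using (hx.mul_left a).add hg
  linarith [hshift.unique hrec]

theorem sum_range_succ_eq_of_succ_eq {x g : ℕ → ℝ} {a : ℝ}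
    (h : ∀ j, x (j + 1) = a * x j + g j) (N : ℕ) :
    ∑ j ∈ range (N + 1), x j = x 0 + a * ∑ j ∈ range N, x j + ∑ j ∈ range N, g j := by
  rw [sum_range_succ', sum_congr rfl fun j _ => h j, sum_add_distrib, mul_sum]
  ring

theorem summable_of_sum_range_succ_le {x : ℕ → ℝ} {C q : ℝ} (hx : ∀ j, 0 ≤ x j) (hq : q < 1)
    (h : ∀ N, ∑ j ∈ range (N + 1), x j ≤ C + q * ∑ j ∈ range N, x j) : Summable x := by
  refine summable_of_sum_range_le hx (c := C / (1 - q)) fun N => ?_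
  have hmono : ∑ j ∈ range N, x j ≤ ∑ j ∈ range (N + 1), x j :=
    sum_le_sum_of_subset_of_nonneg (range_mono N.le_succ) fun j _ _ => hx j
  rw [le_div_iff₀ (by linarith)]
  linarith [h N]

theorem sum_range_comp_tsub_le {x : ℕ → ℝ} (hx : ∀ j, 0 ≤ x j) (t N : ℕ) :
    ∑ j ∈ range N, x (j - t) ≤ t * x 0 + ∑ j ∈ range N, x j := calc
  _ ≤ ∑ j ∈ range (t + N), x (j - t) :=
    sum_le_sum_of_subset_of_nonneg (range_mono (by omega)) fun j _ _ => hx _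
  _ = t * x 0 + ∑ j ∈ range N, x j := by
    rw [sum_range_add, sum_congr rfl fun j hj => by rw [Nat.sub_eq_zero_of_le (mem_range.mp hj).le]]
    simp

theorem hasSum_of_succ_eq_mul_add {x g : ℕ → ℝ} {a S : ℝ} (hx : ∀ j, 0 ≤ x j) (ha : a < 1)
    (hg0 : ∀ j, 0 ≤ g j) (hg : HasSum g S)
    (h : ∀ j, x (j + 1) = a * x j + g j) : HasSum x ((x 0 + S) / (1 - a)) := by
  have hsum : Summable x := summable_of_sum_range_succ_le (C := x 0 + S) hx ha fun N => by
    rw [sum_range_succ_eq_of_succ_eq h]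
    linarith [sum_le_hasSum (range N) (fun j _ => hg0 j) hg]
  have := hsum.hasSum.eq_add_mul_add_of_succ_eq hg h
  convert hsum.hasSum using 1
  rw [div_eq_iff (by linarith)]
  linarith

theorem hasSum_of_succ_eq_delay {x : ℕ → ℝ} {a b : ℝ} {t : ℕ} (hx : ∀ j, 0 ≤ x j)
    (hb : 0 ≤ b) (hab : a + b < 1)
    (h : ∀ j, x (j + 1) = a * x j + b * x (j - t)) :
    HasSum x (x 0 * (1 + b * t) / (1 - a - b)) := by
  have hsum : Summable x :=
    summable_of_sum_range_succ_le (C := x 0 * (1 + b * t)) (q := a + b) hx hab fun N => by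
      rw [sum_range_succ_eq_of_succ_eq h, ← mul_sum]
      nlinarith [sum_range_comp_tsub_le hx t N]
  have := hsum.hasSum.eq_add_mul_add_of_succ_eq ((hsum.hasSum.comp_tsub t).mul_left b) h
  convert hsum.hasSum using 1
  rw [div_eq_iff (by linarith)]
  rw [nsmul_eq_mul] at this
  linarith

section DelayedRecursion

variable {φ : ℕ → ℝ} {a b : ℝ} {t : ℕ}

theorem nonneg_of_delay (h0 : 0 ≤ φ 0) (ha : 0 ≤ a) (hb : 0 ≤ b)
    (h1 : ∀ j, j < t → φ (j + 1) = a * φ j)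
    (h2 : ∀ j, t ≤ j → φ (j + 1) = a * φ j + b * φ (j - t)) (j : ℕ) : 0 ≤ φ j := by
  induction j using Nat.strong_induction_on with
  | _ j ih =>
    rcases j with _ | j
    · exact h0
    rcases lt_or_ge j t with hj | hj
    · rw [h1 j hj]
      exact mul_nonneg ha (ih j j.lt_succ_self)
    · rw [h2 j hj]
      exact add_nonneg (mul_nonneg ha (ih j (by omega))) (mul_nonneg hb (ih _ (by omega)))

theorem sum_range_succ_of_delay (h1 : ∀ j, j < t → φ (j + 1) = a * φ j)
    (h2 : ∀ j, t ≤ j → φ (j + 1) = a * φ j + b * φ (j - t)) (m : ℕ) :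
    ∑ l ∈ range (m + 1), φ l =
      φ 0 + a * ∑ l ∈ range m, φ l + b * ∑ l ∈ range (m - t), φ l := by
  induction m with
  | zero => simp
  | succ m ih =>
    rw [sum_range_succ φ (m + 1)]
    rcases lt_or_ge m t with hm | hm
    · rw [h1 m hm, show m + 1 - t = m - t by omega]
      linear_combination ih - a * sum_range_succ φ m
    · rw [h2 m hm, show m + 1 - t = m - t + 1 by omega, sum_range_succ φ (m - t)]
      linear_combination ih - a * sum_range_succ φ m

theorem sum_range_le_of_delay (h0 : 0 ≤ φ 0) (ha : 0 ≤ a) (hb : 0 ≤ b) (hab : a + b < 1)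
    (h1 : ∀ j, j < t → φ (j + 1) = a * φ j)
    (h2 : ∀ j, t ≤ j → φ (j + 1) = a * φ j + b * φ (j - t)) (m : ℕ) :
    ∑ l ∈ range m, φ l ≤ φ 0 / (1 - a - b) := by
  have hmono : Monotone fun m => ∑ l ∈ range m, φ l := fun _ _ hmn =>
    sum_le_sum_of_subset_of_nonneg (range_mono hmn) fun l _ _ => nonneg_of_delay h0 ha hb h1 h2 l
  have hrec := sum_range_succ_of_delay h1 h2 m
  have hm : ∑ l ∈ range m, φ l ≤ ∑ l ∈ range (m + 1), φ l := hmono m.le_succ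
  have hmt : ∑ l ∈ range (m - t), φ l ≤ ∑ l ∈ range (m + 1), φ l := hmono (by omega)
  rw [le_div_iff₀ (by linarith)]
  nlinarith

theorem hasSum_sub_sum_range_of_delay (h0 : 0 ≤ φ 0) (ha : 0 ≤ a) (hb : 0 ≤ b) (hab : a + b < 1)
    (h1 : ∀ j, j < t → φ (j + 1) = a * φ j)
    (h2 : ∀ j, t ≤ j → φ (j + 1) = a * φ j + b * φ (j - t)) :
    HasSum (fun m => φ 0 / (1 - a - b) - ∑ l ∈ range m, φ l)
      (φ 0 * (1 + b * t) / (1 - a - b) ^ 2) := by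
  have hk : 1 - a - b ≠ 0 := by linarith
  convert hasSum_of_succ_eq_delay (a := a) (b := b) (t := t)
    (fun m => sub_nonneg.mpr (sum_range_le_of_delay h0 ha hb hab h1 h2 m)) hb hab (fun m => ?_)
    using 1
  · field_simp
    simp
  · rw [sum_range_succ_of_delay h1 h2]
    field_simp
    ring

end DelayedRecursion

theorem tendsto_sum_range_add_tail_mul {ω c : ℕ → ℝ} (hω0 : ∀ j, 0 ≤ ω j) (hω : HasSum ω 1)
    (hc : Monotone c) (hωc : Summable fun j => ω j * c j) :
    Tendsto (fun N => ∑ j ∈ range N, ω j * c j + (1 - ∑ j ∈ range N, ω j) * c N)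
      atTop (𝓝 (∑' j, ω j * c j)) := by
  have htail N : HasSum (fun k => ω (k + N)) (1 - ∑ j ∈ range N, ω j) :=
    (hasSum_nat_add_iff' N).mpr hω
  have hlower : Tendsto (fun N => (1 - ∑ j ∈ range N, ω j) * c 0) atTop (𝓝 0) := by
    simpa using ((tendsto_const_nhds (x := (1 : ℝ))).sub hω.tendsto_sum_nat).mul_const (c 0)
  have hrest : Tendsto (fun N => (1 - ∑ j ∈ range N, ω j) * c N) atTop (𝓝 0) := by
    refine tendsto_of_tendsto_of_tendsto_of_le_of_le hlower (tendsto_sum_nat_add fun j => ω j * c j)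
      (fun N => ?_) (fun N => ?_)
    · exact mul_le_mul_of_nonneg_left (hc N.zero_le) ((htail N).nonneg fun k => hω0 _)
    · exact hasSum_le (fun k => mul_le_mul_of_nonneg_left (hc (by omega)) (hω0 _))
        ((htail N).mul_right _) ((summable_nat_add_iff N).mpr hωc).hasSum
  simpa using hωc.hasSum.tendsto_sum_nat.add hrest

theorem succ_eq_of_threshold {ω φ : ℕ → ℝ} {a e : ℝ} {t : ℕ}
    (h1 : ∀ j, 1 ≤ j → j ≤ t → ω j = a * ω (j - 1) + φ 0)
    (h2 : ∀ j, t + 1 ≤ j → ω j = a * ω (j - 1) + φ 0 - e * ∑ l ∈ range (j - t), φ l)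
    (j : ℕ) : ω (j + 1) = a * ω j + (φ 0 - e * ∑ l ∈ range (j + 1 - t), φ l) := by
  rcases le_or_gt (j + 1) t with hj | hj
  · rw [h1 (j + 1) (by omega) hj, Nat.sub_eq_zero_of_le hj]
    simp
  · rw [h2 (j + 1) hj, Nat.add_sub_cancel]
    ring

theorem hasSum_of_threshold_recursion {φ ω : ℕ → ℝ} {a b e : ℝ} {t : ℕ}
    (ha : 0 ≤ a) (hb : 0 ≤ b) (he : 0 < e) (habe : a + b + e = 1) (hφ0 : 0 ≤ φ 0)
    (hφ1 : ∀ j, j < t → φ (j + 1) = a * φ j)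
    (hφ2 : ∀ j, t ≤ j → φ (j + 1) = a * φ j + b * φ (j - t)) (hω0 : 0 ≤ ω 0)
    (hω1 : ∀ j, 1 ≤ j → j ≤ t → ω j = a * ω (j - 1) + φ 0)
    (hω2 : ∀ j, t + 1 ≤ j → ω j = a * ω (j - 1) + φ 0 - e * ∑ l ∈ range (j - t), φ l) :
    (∀ j, 0 ≤ ω j) ∧ HasSum ω ((ω 0 + ((t - 1) * φ 0 + φ 0 * (1 + b * t) / e)) / (1 - a)) := by
  have hk : 1 - a - b = e := by linarith
  set T : ℕ → ℝ := fun m => φ 0 / e - ∑ l ∈ range m, φ l with hT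
  have hTnn m : 0 ≤ T m := by
    simpa [hT, hk] using sum_range_le_of_delay hφ0 ha hb (by linarith) hφ1 hφ2 m
  have hTsum : HasSum T (φ 0 * (1 + b * t) / e ^ 2) := by
    simpa [hT, hk] using hasSum_sub_sum_range_of_delay hφ0 ha hb (by linarith) hφ1 hφ2
  have hg : HasSum (fun j => e * T (j + 1 - t))
      ((t - 1) * φ 0 + φ 0 * (1 + b * t) / e) := by
    have hshift := ((hasSum_nat_add_iff' 1).mpr (hTsum.comp_tsub t)).mul_left e
    have hval : e * (t • T 0 + φ 0 * (1 + b * t) / e ^ 2 - ∑ i ∈ range 1, T (i - t)) =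
        (t - 1) * φ 0 + φ 0 * (1 + b * t) / e := by
      simp only [hT, nsmul_eq_mul, range_one, sum_singleton, Nat.zero_sub, range_zero, sum_empty,
        sub_zero]
      field_simp
      ring
    rwa [hval] at hshift
  have hrec j : ω (j + 1) = a * ω j + e * T (j + 1 - t) := by
    rw [succ_eq_of_threshold hω1 hω2, hT, mul_sub, mul_div_cancel₀ _ he.ne']
  have hωnn j : 0 ≤ ω j := by
    induction j with
    | zero => exact hω0
    | succ j ih => rw [hrec]; exact add_nonneg (mul_nonneg ha ih) (mul_nonneg he.le (hTnn _))
  exact ⟨hωnn,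
    hasSum_of_succ_eq_mul_add hωnn (by linarith) (fun j => mul_nonneg he.le (hTnn _)) hg hrec⟩

theorem hasSum_weights {lam lam_e : ℝ} {tbar : ℕ} {φ ω : ℕ → ℝ}
    (hlam0 : 0 < lam) (hlam1 : lam < 1) (hle0 : 0 < lam_e) (hle1 : lam_e < 1)
    (hφ0 : φ 0 = lam * lam_e / (lam * tbar + 1))
    (hφ1 : ∀ j, j < tbar → φ (j + 1) = (1 - lam) * (1 - lam_e) * φ j)
    (hφ2 : ∀ j, tbar ≤ j →
      φ (j + 1) = (1 - lam) * (1 - lam_e) * φ j + lam * (1 - lam_e) * φ (j - tbar))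
    (hω0 : ω 0 = lam_e / (lam * tbar + 1))
    (hω1 : ∀ j, 1 ≤ j → j ≤ tbar → ω j = (1 - lam) * (1 - lam_e) * ω (j - 1) + φ 0)
    (hω2 : ∀ j, tbar + 1 ≤ j →
      ω j = (1 - lam) * (1 - lam_e) * ω (j - 1) + φ 0 - lam_e * ∑ l ∈ range (j - tbar), φ l) :
    (∀ j, 0 ≤ ω j) ∧ HasSum ω 1 := by
  obtain ⟨hωnn, hsum⟩ := hasSum_of_threshold_recursion (by nlinarith) (by nlinarith) hle0
    (by ring) (by rw [hφ0]; positivity) hφ1 hφ2 (by rw [hω0]; positivity) hω1 hω2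
  refine ⟨hωnn, ?_⟩
  have hval : (ω 0 + ((tbar - 1) * φ 0 + φ 0 * (1 + lam * (1 - lam_e) * tbar) / lam_e))
      / (1 - (1 - lam) * (1 - lam_e)) = 1 := by
    rw [div_eq_one_iff_eq (by nlinarith), hω0, hφ0]
    field_simp
    ring
  rwa [hval] at hsum

open scoped MatrixOrder in
theorem Matrix.monotone_trace_iterate {m : Type*} [Fintype m] {A Q P : Matrix m m ℝ}
    (hP : (A * P * Aᵀ + Q - P).PosSemidef) :
    Monotone fun j => ((fun X => A * X * Aᵀ + Q)^[j] P).trace := by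
  have hf : Monotone fun X : Matrix m m ℝ => A * X * Aᵀ + Q := fun X Y hXY => by
    rw [le_iff, add_sub_add_right_eq_sub, ← sub_mul, ← mul_sub,
      ← conjTranspose_eq_transpose_of_trivial]
    exact PosSemidef.mul_mul_conjTranspose_same hXY A
  exact (tracePositiveLinearMap m ℝ ℝ).monotone'.comp (hf.monotone_iterate_of_le_map hP)

theorem truncation_tendsto_general
    (lam lam_e : ℝ) (hlam0 : 0 < lam) (hlam1 : lam < 1)
    (hle0 : 0 < lam_e) (hle1 : lam_e < 1)
    (tbar : ℕ)
    (φ : ℕ → ℝ)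
    (hφ0 : φ 0 = lam * lam_e / (lam * (tbar : ℝ) + 1))
    (hφ1 : ∀ j, j < tbar → φ (j + 1) = (1 - lam) * (1 - lam_e) * φ j)
    (hφ2 : ∀ j, tbar ≤ j → φ (j + 1) =
      (1 - lam) * (1 - lam_e) * φ j + lam * (1 - lam_e) * φ (j - tbar))
    (ω : ℕ → ℝ)
    (hω0 : ω 0 = lam_e / (lam * (tbar : ℝ) + 1))
    (hω1 : ∀ j, 1 ≤ j → j ≤ tbar →
      ω j = (1 - lam) * (1 - lam_e) * ω (j - 1) + φ 0)
    (hω2 : ∀ j, tbar + 1 ≤ j →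
      ω j = (1 - lam) * (1 - lam_e) * ω (j - 1) + φ 0
        - lam_e * ∑ l ∈ Finset.range (j - tbar), φ l)
    (n : ℕ)
    (A Q Pbar : Matrix (Fin n) (Fin n) ℝ)
    (hloewner : (A * Pbar * Aᵀ + Q - Pbar).PosSemidef)
    (c : ℕ → ℝ) (hc : ∀ j, c j = ((fun X => A * X * Aᵀ + Q)^[j] Pbar).trace)
    (hsum : Summable fun j : ℕ => ω j * c j) :
    Tendsto
      (fun N : ℕ =>
        (∑ j ∈ Finset.range (N + 1), ω j * c j)
          + (1 - ∑ j ∈ Finset.range (N + 1), ω j) * c (N + 1))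
      atTop (nhds (∑' j : ℕ, ω j * c j)) := by
  obtain ⟨hω_nonneg, hω⟩ :=
    hasSum_weights hlam0 hlam1 hle0 hle1 hφ0 hφ1 hφ2 hω0 hω1 hω2
  have hc_mono : Monotone c := by
    simpa only [← hc] using Matrix.monotone_trace_iterate hloewner
  exact (tendsto_sum_range_add_tail_mul hω_nonneg hω hc_mono hsum).comp (tendsto_add_atTop_nat 1)

/-- Theorem 2, part II: the truncations `L(N, t̄)` converge to the
averaged expected error covariance as the truncation horizon grows. -/
theorem truncation_tendsto
    (lam lam_e : ℝ) (hlam0 : 0 < lam) (hlam1 : lam < 1)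
    (hle0 : 0 < lam_e) (hle1 : lam_e < 1)
    (tbar : ℕ)
    (φ : ℕ → ℝ)
    (hφ0 : φ 0 = lam * lam_e / (lam * (tbar : ℝ) + 1))
    (hφ1 : ∀ j, j < tbar → φ (j + 1) = (1 - lam) * (1 - lam_e) * φ j)
    (hφ2 : ∀ j, tbar ≤ j → φ (j + 1) =
      (1 - lam) * (1 - lam_e) * φ j + lam * (1 - lam_e) * φ (j - tbar))
    (ω : ℕ → ℝ)
    (hω0 : ω 0 = lam_e / (lam * (tbar : ℝ) + 1))
    (hω1 : ∀ j, 1 ≤ j → j ≤ tbar →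
      ω j = (1 - lam) * (1 - lam_e) * ω (j - 1) + φ 0)
    (hω2 : ∀ j, tbar + 1 ≤ j →
      ω j = (1 - lam) * (1 - lam_e) * ω (j - 1) + φ 0
        - lam_e * ∑ l ∈ Finset.range (j - tbar), φ l)
    (n : ℕ) (hn : 0 < n)
    (A Q Pbar : Matrix (Fin n) (Fin n) ℝ)
    (hQ : Q.PosSemidef) (hP : Pbar.PosSemidef)
    (hloewner : (A * Pbar * Aᵀ + Q - Pbar).PosSemidef)
    (c : ℕ → ℝ) (hc : ∀ j, c j = ((fun X => A * X * Aᵀ + Q)^[j] Pbar).trace)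
    (hsum : Summable fun j : ℕ => ω j * c j) :
    Tendsto
      (fun N : ℕ =>
        (∑ j ∈ Finset.range (N + 1), ω j * c j)
          + (1 - ∑ j ∈ Finset.range (N + 1), ω j) * c (N + 1))
      atTop (nhds (∑' j : ℕ, ω j * c j)) :=
  truncation_tendsto_general lam lam_e hlam0 hlam1 hle0 hle1 tbar φ hφ0 hφ1 hφ2 ω hω0 hω1 hω2 n A Q
    Pbar hloewner c hc hsum
end
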